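/- arXiv:2007.13447 — 2 statements merged into one kernel-verified Lean document; each statement's English description precedes it below -/
import Mathlib

section
/- Let f = (f_1, …, f_n) : 𝔸^m → 𝔸^n be a morphism of affine spaces over an algebraically closed field, where each f_i is a homogeneous polynomial of positive degree. If f^{-1}(0) = {0}, then f is a finite morphism (i.e., the induced ring map k[y_1,…,y_n] → k[x_1,…,x_m] makes k[x_1,…,x_m] a finitely generated module). -/
/-!
By the Nullstellensatz every variable lies in the radical of the ideal `(f₁, …, fₙ)`, so for `N`
large each `X j ^ N = ∑ i, hᵢ fᵢ`; taking homogeneous components of degree `N` we may take `hᵢ`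
homogeneous of degree `N - dᵢ < N`. Then `X^s = X j ^ N X^τ` rewrites any monomial with some
exponent `≥ N` as a `k[f]`-combination of polynomials of smaller degree, so by induction on the
degree the finitely many monomials with all exponents `< N` generate `k[X]` as a `k[f]`-module.
-/

open MvPolynomial

namespace MvPolynomial

section Homogeneous

variable {σ R : Type*} [CommSemiring R]

theorem homogeneousComponent_mul_of_isHomogeneous {g : MvPolynomial σ R} {e N : ℕ}
    (hg : g.IsHomogeneous e) (he : e ≤ N) (c : MvPolynomial σ R) :
    homogeneousComponent N (c * g) = homogeneousComponent (N - e) c * g := by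
  induction c using MvPolynomial.induction_on' with
  | monomial s a =>
    have hs : (monomial s a).IsHomogeneous s.degree := isHomogeneous_monomial a rfl
    rw [homogeneousComponent_of_mem (hs.mul hg), homogeneousComponent_of_mem hs]
    split_ifs <;> first | omega | simp
  | add p q hp hq => rw [add_mul, map_add, hp, hq, map_add, add_mul]

theorem IsHomogeneous.exists_eq_sum_mul_of_mem_span {ι : Type*} [Fintype ι]
    {f : ι → MvPolynomial σ R} {d : ι → ℕ} (hf : ∀ i, (f i).IsHomogeneous (d i))
    {p : MvPolynomial σ R} {N : ℕ} (hp : p.IsHomogeneous N) (hd : ∀ i, d i ≤ N)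
    (hmem : p ∈ Ideal.span (Set.range f)) :
    ∃ h : ι → MvPolynomial σ R, (∀ i, (h i).IsHomogeneous (N - d i)) ∧ p = ∑ i, h i * f i := by
  obtain ⟨c, rfl⟩ := Ideal.mem_span_range_iff_exists_fun.1 hmem
  refine ⟨fun i => homogeneousComponent (N - d i) (c i),
    fun i => homogeneousComponent_isHomogeneous _ _, ?_⟩
  calc ∑ i, c i * f i = homogeneousComponent N (∑ i, c i * f i) :=
        (homogeneousComponent_eq_self hp).symm
    _ = ∑ i, homogeneousComponent (N - d i) (c i) * f i := by
        rw [map_sum]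
        exact Finset.sum_congr rfl fun i _ =>
          homogeneousComponent_mul_of_isHomogeneous (hf i) (hd i) (c i)

end Homogeneous

theorem X_mem_radical_span_of_eval_eq_zero {σ k ι : Type*} [Field k] [IsAlgClosed k] [Finite σ]
    {f : ι → MvPolynomial σ k} (hzero : ∀ x : σ → k, (∀ i, eval x (f i) = 0) → x = 0)
    (j : σ) : X j ∈ (Ideal.span (Set.range f)).radical := by
  rw [← vanishingIdeal_zeroLocus_eq_radical (K := k)]
  intro x hx
  rw [hzero x fun i => hx (f i) (Ideal.subset_span ⟨i, rfl⟩)]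
  simp

section ModuleFinite

variable {σ k A : Type*} [CommSemiring k] [CommSemiring A] [Algebra k A]
  [Algebra A (MvPolynomial σ k)] [IsScalarTower k A (MvPolynomial σ k)]

theorem mem_of_forall_monomial_one_mem {M : Submodule A (MvPolynomial σ k)}
    {p : MvPolynomial σ k} (hp : ∀ s ∈ p.support, monomial s (1 : k) ∈ M) : p ∈ M := by
  rw [p.as_sum]
  refine M.sum_mem fun s hs => ?_
  rw [← mul_one (coeff s p), ← smul_eq_mul, ← smul_monomial]
  exact M.smul_of_tower_mem _ (hp s hs)

theorem finite_of_X_pow_eq_sum [Finite σ] {ι : Type*} [Fintype ι] (a : ι → A) (N : ℕ)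
    (hX : ∀ j, ∃ h : ι → MvPolynomial σ k,
      (∀ i, (h i).totalDegree < N) ∧ X j ^ N = ∑ i, h i * algebraMap A _ (a i)) :
    Module.Finite A (MvPolynomial σ k) := by
  choose h hdeg hX using hX
  set S : Set (σ →₀ ℕ) := {s | ∀ j, s j < N}
  have hS : S.Finite :=
    (Set.Finite.pi' fun _ => Set.finite_Iio N).preimage Finsupp.equivFunOnFinite.injective.injOn
  set M := Submodule.span A ((fun s => monomial s (1 : k)) '' S)
  have hmonomial : ∀ s, monomial s (1 : k) ∈ M := by
    intro s
    induction hs : s.degree using Nat.strong_induction_on generalizing s with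
    | _ e ih =>
    by_cases hsmall : ∀ j, s j < N
    · exact Submodule.subset_span ⟨s, hsmall, rfl⟩
    obtain ⟨j, hj⟩ := not_forall.1 hsmall
    obtain ⟨τ, rfl⟩ : ∃ τ, s = Finsupp.single j N + τ :=
      ⟨_, (add_tsub_cancel_of_le (Finsupp.single_le_iff.2 (not_lt.1 hj))).symm⟩
    have hsplit : monomial (Finsupp.single j N + τ) (1 : k)
        = ∑ i, a i • (h j i * monomial τ 1) := by
      rw [monomial_single_add, hX j, Finset.sum_mul]
      refine Finset.sum_congr rfl fun i _ => ?_
      rw [Algebra.smul_def, mul_right_comm, mul_comm]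
    rw [hsplit]
    refine M.sum_mem fun i _ => M.smul_mem _ (mem_of_forall_monomial_one_mem fun t ht => ?_)
    refine ih _ ?_ t rfl
    calc t.degree ≤ (h j i * monomial τ 1).totalDegree :=
          (Finsupp.degree_apply t).trans_le (le_totalDegree ht)
      _ ≤ (h j i).totalDegree + (monomial τ (1 : k)).totalDegree := totalDegree_mul _ _
      _ ≤ (h j i).totalDegree + τ.degree := by
        gcongr
        exact (isHomogeneous_monomial (1 : k) rfl).totalDegree_le
      _ < N + τ.degree := by have := hdeg j i; omega
      _ = e := by rw [← hs, map_add, Finsupp.degree_single]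
  have htop : M = ⊤ :=
    eq_top_iff.2 fun p _ => mem_of_forall_monomial_one_mem fun s _ => hmonomial s
  exact ⟨Submodule.fg_def.2 ⟨_, hS.image _, htop⟩⟩

end ModuleFinite

end MvPolynomial

/-- Zelaci's Lemma 1.3: a morphism `𝔸^m → 𝔸^n` given by homogeneous polynomials
of positive degree whose only common zero is the origin is a finite morphism,
i.e. the induced map of coordinate rings is module-finite. -/
theorem stmt0 (k : Type*) [Field k] [IsAlgClosed k] (m n : ℕ)
    (f : Fin n → MvPolynomial (Fin m) k) (d : Fin n → ℕ)
    (hd : ∀ i, 1 ≤ d i)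
    (hhom : ∀ i, (f i).IsHomogeneous (d i))
    (hzero : ∀ x : Fin m → k, (∀ i, MvPolynomial.eval x (f i) = 0) → x = 0) :
    RingHom.Finite (MvPolynomial.aeval f :
      MvPolynomial (Fin n) k →ₐ[k] MvPolynomial (Fin m) k).toRingHom := by
  obtain ⟨N, hXN, hdN⟩ : ∃ N, (∀ j, X j ^ N ∈ Ideal.span (Set.range f)) ∧ ∀ i, d i ≤ N := by
    have hX : ∀ᶠ N in Filter.atTop, ∀ j, X j ^ N ∈ Ideal.span (Set.range f) :=
      Filter.eventually_all.2 fun j => by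
        obtain ⟨e, he⟩ := X_mem_radical_span_of_eval_eq_zero hzero j
        exact Filter.eventually_atTop.2 ⟨e, fun N hN => Ideal.pow_mem_of_pow_mem _ he hN⟩
    exact (hX.and (Filter.eventually_all.2 fun i => Filter.eventually_ge_atTop (d i))).exists
  let _ : Algebra (MvPolynomial (Fin n) k) (MvPolynomial (Fin m) k) :=
    (aeval f).toRingHom.toAlgebra
  have : IsScalarTower k (MvPolynomial (Fin n) k) (MvPolynomial (Fin m) k) :=
    IsScalarTower.of_algebraMap_eq fun c => ((aeval f).commutes c).symm
  refine finite_of_X_pow_eq_sum (X : Fin n → MvPolynomial (Fin n) k) N fun j => ?_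
  obtain ⟨h, hh, hsum⟩ := (isHomogeneous_X_pow j N).exists_eq_sum_mul_of_mem_span hhom hdN (hXN j)
  refine ⟨h, fun i => (hh i).totalDegree_le.trans_lt (Nat.sub_lt ((hd i).trans (hdN i)) (hd i)),
    by simpa [RingHom.algebraMap_toAlgebra] using hsum⟩
end

section
/- Let V be a finite-dimensional vector space over a field, and let φ : V → V be a nilpotent linear endomorphism preserving a complete flag 0 = V_0 ⊂ V_1 ⊂ … ⊂ V_r = V (i.e., φ(V_i) ⊆ V_i for all i). Then there exists a refinement of the flag, namely a complete flag 0 = W_0 ⊂ W_1 ⊂ … ⊂ W_s = V with each V_i among the W_j, such that φ is strongly nilpotent with respect to it: φ(W_j) ⊆ W_{j−1} for all j ≥ 1. -/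
section Aux

variable {K : Type*} [Field K] {V : Type*} [AddCommGroup V] [Module K V]

open Submodule

attribute [local instance] Classical.propDecidable

private noncomputable def jmp (C : ℕ → Submodule K V) : ℕ → ℕ
  | 0 => 0
  | j + 1 =>
    if h : ∃ t, C (jmp C j + t + 1) ≠ C (jmp C j) then jmp C j + Nat.find h + 1
    else jmp C j

private lemma jmp_le_succ (C : ℕ → Submodule K V) (j : ℕ) : jmp C j ≤ jmp C (j + 1) := by
  rw [jmp]
  split <;> omega

private lemma jmp_const (C : ℕ → Submodule K V) (j m : ℕ) (h1 : jmp C j ≤ m)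
    (h2 : m < jmp C (j + 1)) : C m = C (jmp C j) := by
  by_cases h : ∃ t, C (jmp C j + t + 1) ≠ C (jmp C j)
  · rw [jmp, dif_pos h] at h2
    rcases eq_or_lt_of_le h1 with heq | hlt
    · rw [← heq]
    · have ht : m - jmp C j - 1 < Nat.find h := by omega
      have hmin := Nat.find_min h ht
      have hm : jmp C j + (m - jmp C j - 1) + 1 = m := by omega
      rw [hm] at hmin
      exact not_not.mp hmin
  · exfalso
    rw [jmp, dif_neg h] at h2
    omega

private lemma jmp_ex (C : ℕ → Submodule K V) {j : ℕ} (hne : C (jmp C j) ≠ ⊤)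
    (M : ℕ) (htop : ∀ m, M ≤ m → C m = ⊤) :
    ∃ t, C (jmp C j + t + 1) ≠ C (jmp C j) :=
  ⟨M, by rw [htop _ (by omega)]; exact Ne.symm hne⟩

private lemma jmp_strict (C : ℕ → Submodule K V) (hmono : Monotone C) {j : ℕ}
    (hne : C (jmp C j) ≠ ⊤) (M : ℕ) (htop : ∀ m, M ≤ m → C m = ⊤) :
    C (jmp C j) < C (jmp C (j + 1)) := by
  have h := jmp_ex C hne M htop
  have hg1 : jmp C (j + 1) = jmp C j + Nat.find h + 1 := by rw [jmp, dif_pos h]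
  have hnex : C (jmp C (j + 1)) ≠ C (jmp C j) := by rw [hg1]; exact Nat.find_spec h
  exact lt_of_le_of_ne (hmono (jmp_le_succ C j)) (Ne.symm hnex)

private lemma refine_chain [FiniteDimensional K V] (φ : V →ₗ[K] V) (C : ℕ → Submodule K V)
    (hmono : Monotone C) (hstep : ∀ m, Submodule.map φ (C (m + 1)) ≤ C m)
    (h0 : C 0 = ⊥) (M : ℕ) (htop : ∀ m, M ≤ m → C m = ⊤) :
    ∃ (s : ℕ) (U : Fin (s + 1) → Submodule K V), StrictMono U ∧
      U 0 = ⊥ ∧ U (Fin.last s) = ⊤ ∧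
      (∀ m, ∃ j, C m = U j) ∧
      (∀ j : Fin s, Submodule.map φ (U j.succ) ≤ U j.castSucc) := by
  classical
  have hex : ∃ j, C (jmp C j) = ⊤ := by
    have claim : ∀ j, C (jmp C j) = ⊤ ∨ j ≤ Module.finrank K ↥(C (jmp C j)) := by
      intro j
      induction j with
      | zero => exact Or.inr (Nat.zero_le _)
      | succ j ih =>
        by_cases htp : C (jmp C j) = ⊤
        · exact Or.inl (eq_top_iff.mpr (htp ▸ hmono (jmp_le_succ C j)))
        · have hlt := jmp_strict C hmono htp M htop
          have hrk := Submodule.finrank_lt_finrank_of_lt hlt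
          rcases ih with h | h
          · exact absurd h htp
          · exact Or.inr (by omega)
    rcases claim (Module.finrank K V) with h | h
    · exact ⟨_, h⟩
    · refine ⟨Module.finrank K V, Submodule.eq_top_of_finrank_eq ?_⟩
      have := Submodule.finrank_le (C (jmp C (Module.finrank K V)))
      omega
  set s := Nat.find hex with hs
  have hstop : C (jmp C s) = ⊤ := Nat.find_spec hex
  have hlt_ne : ∀ j, j < s → C (jmp C j) ≠ ⊤ := fun j hj => Nat.find_min hex hj
  refine ⟨s, fun j => C (jmp C j.val), ?_, ?_, ?_, ?_, ?_⟩
  · rw [Fin.strictMono_iff_lt_succ]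
    intro j
    exact jmp_strict C hmono (hlt_ne j.val j.isLt) M htop
  · show C (jmp C 0) = ⊥
    rw [jmp, h0]
  · exact hstop
  · intro m
    set j := Nat.findGreatest (fun j => jmp C j ≤ m) s with hj
    have hj_le : j ≤ s := Nat.findGreatest_le s
    have hgj : jmp C j ≤ m := by
      have h00 : jmp C 0 ≤ m := Nat.zero_le m
      exact Nat.findGreatest_spec (P := fun j => jmp C j ≤ m) (Nat.zero_le s) h00
    refine ⟨⟨j, by omega⟩, ?_⟩
    show C m = C (jmp C j)
    rcases eq_or_lt_of_le hj_le with heq | hjs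
    · rw [heq, hstop]
      exact eq_top_iff.mpr (hstop ▸ hmono (heq ▸ hgj))
    · have hnotP : ¬ jmp C (j + 1) ≤ m :=
        Nat.findGreatest_is_greatest (P := fun j => jmp C j ≤ m) (k := j + 1) (n := s) (by omega) (by omega)
      exact jmp_const C j m hgj (by omega)
  · intro j
    have hne := hlt_ne j.val j.isLt
    have h := jmp_ex C hne M htop
    have hg1 : jmp C (j.val + 1) = jmp C j.val + Nat.find h + 1 := by rw [jmp, dif_pos h]
    show Submodule.map φ (C (jmp C (j.val + 1))) ≤ C (jmp C j.val)
    rw [hg1]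
    calc Submodule.map φ (C (jmp C j.val + Nat.find h + 1)) ≤ C (jmp C j.val + Nat.find h) :=
        hstep _
      _ = C (jmp C j.val) := jmp_const C j.val _ (by omega) (by omega)

end Aux

/-- A nilpotent endomorphism preserving a flag becomes strongly nilpotent
(maps each step into the previous one) after a suitable refinement of the flag. -/
theorem stmt4 (K : Type*) [Field K] (V : Type*) [AddCommGroup V] [Module K V]
    [FiniteDimensional K V] (φ : V →ₗ[K] V) (hnil : IsNilpotent φ)
    (r : ℕ) (W : Fin (r + 1) → Submodule K V) (hW : StrictMono W)
    (hW0 : W 0 = ⊥) (hWtop : W (Fin.last r) = ⊤)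
    (hinv : ∀ i, Submodule.map φ (W i) ≤ W i) :
    ∃ (s : ℕ) (U : Fin (s + 1) → Submodule K V), StrictMono U ∧
      U 0 = ⊥ ∧ U (Fin.last s) = ⊤ ∧
      (∀ i, ∃ j, W i = U j) ∧
      (∀ j : Fin s, Submodule.map φ (U j.succ) ≤ U j.castSucc) := by
  classical
  obtain ⟨n0, hn0⟩ := hnil
  set n := n0 + 1 with hndef
  have hnpos : 0 < n := Nat.succ_pos _
  have hφn : φ ^ n = 0 := by rw [hndef, pow_succ, hn0, zero_mul]
  -- extend W to a ℕ-indexed family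
  set W' : ℕ → Submodule K V := fun i => W ⟨min i r, Nat.lt_succ_of_le (min_le_right _ _)⟩
    with hW'def
  have hW'mono : Monotone W' := by
    intro a b hab
    exact hW.monotone (by simp only [Fin.mk_le_mk]; omega)
  have hW'eq : ∀ i : Fin (r + 1), W' i.val = W i := by
    intro i
    have : (⟨min i.val r, Nat.lt_succ_of_le (min_le_right _ _)⟩ : Fin (r + 1)) = i :=
      Fin.ext (by simp only []; omega)
    rw [hW'def]; simp only []; rw [this]
  have hW'inv : ∀ i, Submodule.map φ (W' i) ≤ W' i := fun i => hinv _
  have hW'0 : W' 0 = ⊥ := by simpa [hW0] using hW'eq 0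
  have hW'top : ∀ i, r ≤ i → W' i = ⊤ := by
    intro i hi
    have : (⟨min i r, Nat.lt_succ_of_le (min_le_right _ _)⟩ : Fin (r + 1)) = Fin.last r :=
      Fin.ext (by simp only [Fin.val_last]; omega)
    rw [hW'def]; simp only []; rw [this, hWtop]
  have hW'le : ∀ i, W' i ≤ W' (i + 1) := fun i => hW'mono (Nat.le_succ i)
  -- the refined (weakly monotone) chain
  set C : ℕ → Submodule K V :=
    fun m => W' (m / n + 1) ⊓ Submodule.comap (φ ^ (m % n)) (W' (m / n)) with hCdef
  have hCeq : ∀ i, C (i * n) = W' i := by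
    intro i
    have h1 : i * n / n = i := Nat.mul_div_cancel i hnpos
    have h2 : i * n % n = 0 := Nat.mul_mod_left i n
    rw [hCdef]
    simp only [h1, h2, pow_zero, Module.End.one_eq_id, Submodule.comap_id]
    exact inf_eq_right.mpr (hW'le i)
  have hdich : ∀ m, ((m + 1) % n = m % n + 1 ∧ (m + 1) / n = m / n) ∨
      (m % n + 1 = n ∧ (m + 1) % n = 0 ∧ (m + 1) / n = m / n + 1) := by
    intro m
    have hb : m % n < n := Nat.mod_lt _ hnpos
    rcases eq_or_lt_of_le (Nat.succ_le_of_lt hb) with heq | hlt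
    · right
      have h2 := Nat.div_add_mod m n
      have e : m + 1 = n * (m / n + 1) := by rw [Nat.mul_succ]; linarith
      exact ⟨heq, by rw [e]; exact Nat.mul_mod_right n _,
        by rw [e]; exact Nat.mul_div_cancel_left _ hnpos⟩
    · left
      have hm1 : (m + 1) % n = m % n + 1 := by
        rw [Nat.add_mod, Nat.mod_eq_of_lt (show 1 < n by omega), Nat.mod_eq_of_lt hlt]
      refine ⟨hm1, ?_⟩
      have hndvd : ¬ n ∣ (m + 1) := by
        rw [Nat.dvd_iff_mod_eq_zero]; omega
      rw [Nat.succ_div, if_neg hndvd]; omega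
  have hCle : ∀ m, C m ≤ C (m + 1) ∧ Submodule.map φ (C (m + 1)) ≤ C m := by
    intro m
    rcases hdich m with ⟨hmod, hdiv⟩ | ⟨hmod, hmod0, hdiv⟩
    · have hC1 : C (m + 1) =
          W' (m / n + 1) ⊓ Submodule.comap (φ ^ (m % n + 1)) (W' (m / n)) := by
        rw [hCdef]; simp only [hmod, hdiv]
      constructor
      · rw [hC1, hCdef]
        refine inf_le_inf le_rfl ?_
        intro x hx
        simp only [Submodule.mem_comap] at *
        rw [pow_succ', Module.End.mul_apply]
        exact hW'inv _ (Submodule.mem_map_of_mem hx)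
      · rw [hC1]
        intro x hx
        obtain ⟨y, hy, rfl⟩ := hx
        obtain ⟨hy1, hy2⟩ := Submodule.mem_inf.mp hy
        refine Submodule.mem_inf.mpr ⟨hW'inv _ (Submodule.mem_map_of_mem hy1), ?_⟩
        simp only [Submodule.mem_comap] at *
        rw [← Module.End.mul_apply, ← pow_succ]
        exact hy2
    · have hC1 : C (m + 1) = W' (m / n + 1) := by
        rw [hCdef]
        simp only [hmod0, hdiv, pow_zero, Module.End.one_eq_id, Submodule.comap_id]
        exact inf_eq_right.mpr (hW'le _)
      constructor
      · rw [hC1, hCdef]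
        exact inf_le_left
      · rw [hC1]
        intro x hx
        obtain ⟨y, hy, rfl⟩ := hx
        refine Submodule.mem_inf.mpr ⟨hW'inv _ (Submodule.mem_map_of_mem hy), ?_⟩
        simp only [Submodule.mem_comap]
        have he : (φ ^ (m % n)) (φ y) = (φ ^ n) y := by
          rw [← Module.End.mul_apply, ← pow_succ, hmod]
        rw [he, hφn]
        simp only [LinearMap.zero_apply]
        exact Submodule.zero_mem _
  have hCtop : ∀ m, r * n ≤ m → C m = ⊤ := by
    intro m hm
    have hr : r ≤ m / n := (Nat.le_div_iff_mul_le hnpos).mpr hm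
    rw [hCdef]
    simp only [hW'top _ (by omega : r ≤ m / n + 1), hW'top _ hr, Submodule.comap_top,
      inf_top_eq, top_inf_eq]
  have hC0 : C 0 = ⊥ := by
    have := hCeq 0
    rw [zero_mul] at this
    rw [this, hW'0]
  obtain ⟨s, U, h1, h2, h3, h4, h5⟩ := refine_chain φ C
    (monotone_nat_of_le_succ fun m => (hCle m).1) (fun m => (hCle m).2) hC0 (r * n) hCtop
  refine ⟨s, U, h1, h2, h3, ?_, h5⟩
  intro i
  obtain ⟨j, hj⟩ := h4 (i.val * n)
  refine ⟨j, ?_⟩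
  rw [← hj, hCeq i.val, hW'eq i]
end
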